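/- Let s ∈ (0,1), let E ⊂ ℝⁿ be a bounded measurable set, and let E₁ denote the set of points at distance at most 1 from E. Let A ∈ L²(ℝⁿ; ℂⁿ) vanish almost everywhere outside E and have finite Besov seminorm [A]_{B^{2,∞}_s}. Let Φ : ℝⁿ → ℂ satisfy |Φ(x)| ≤ K for all x and |Φ(x) − Φ(y)| ≤ H |x − y|^s for all x, y. Then for every y ∈ ℝⁿ with |y| ≤ 1, ∫_{ℝⁿ} |A(x+y) e^{Φ(x+y)} − A(x) e^{Φ(x)}| dx ≤ e^{K} ( m(E₁)^{1/2} [A]_{B^{2,∞}_s} + H · m(E)^{1/2} ‖A‖_{L²(ℝⁿ)} ) |y|^s, where m denotes Lebesgue measure. -/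

import Mathlib

open MeasureTheory Filter Complex
open scoped ENNReal

noncomputable section

/-- The Besov `B^{2,∞}_s` seminorm: `sup_{y ≠ 0} ‖f(·+y) - f‖_{L²} / |y|^s`. -/
def besovSemi (n : ℕ) (s : ℝ) {F : Type*} [NormedAddCommGroup F]
    (f : EuclideanSpace ℝ (Fin n) → F) : ℝ≥0∞ :=
  ⨆ (y : EuclideanSpace ℝ (Fin n)) (_ : y ≠ 0),
    eLpNorm (fun x => f (x + y) - f x) 2 volume / ENNReal.ofReal (‖y‖ ^ s)

/-!
Split `e^{Φ(x+y)} A(x+y) - e^{Φ(x)} A(x)` as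
`e^{Φ(x+y)} (A(x+y) - A(x)) + (e^{Φ(x+y)} - e^{Φ(x)}) A(x)`.
In the first term `|e^Φ| ≤ e^K`, and `A(· + y) - A` vanishes off `E₁` because `|y| ≤ 1`, so
Cauchy–Schwarz on `E₁` and the Besov seminorm bound its `L¹` norm by `m(E₁)^{1/2} [A] |y|^s`.
In the second, `exp` is `e^K`-Lipschitz on the half-plane `Re ≤ K`, so the factor is at most
`e^K H |y|^s`, and Cauchy–Schwarz on `E` gives `‖A‖₁ ≤ m(E)^{1/2} ‖A‖₂`.
-/

open Metric Topology

lemma Complex.norm_exp_sub_exp_le {K : ℝ} {a b : ℂ} (ha : a.re ≤ K) (hb : b.re ≤ K) :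
    ‖exp a - exp b‖ ≤ Real.exp K * ‖a - b‖ :=
  (convex_halfSpace_re_le K).norm_image_sub_le_of_norm_hasDerivWithin_le
    (fun z _ => (Complex.hasDerivAt_exp z).hasDerivWithinAt)
    (fun z hz => by rw [Complex.norm_exp]; exact Real.exp_le_exp.mpr hz) hb ha

lemma norm_exp_comp_add_sub_exp_comp_le {X : Type*} [SeminormedAddCommGroup X] {Φ : X → ℂ}
    {K H s : ℝ} (hre : ∀ x, (Φ x).re ≤ K) (hΦ : ∀ x y, ‖Φ x - Φ y‖ ≤ H * ‖x - y‖ ^ s) (x y : X) :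
    ‖exp (Φ (x + y)) - exp (Φ x)‖ ≤ Real.exp K * (H * ‖y‖ ^ s) :=
  calc _ ≤ Real.exp K * ‖Φ (x + y) - Φ x‖ := norm_exp_sub_exp_le (hre _) (hre _)
    _ ≤ Real.exp K * (H * ‖y‖ ^ s) := by gcongr; simpa using hΦ (x + y) x

lemma continuous_of_norm_sub_le_mul_rpow {X Y : Type*} [SeminormedAddCommGroup X]
    [SeminormedAddCommGroup Y] {f : X → Y} {H s : ℝ} (hs : 0 < s)
    (hf : ∀ x y, ‖f x - f y‖ ≤ H * ‖x - y‖ ^ s) : Continuous f := by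
  refine continuous_iff_continuousAt.2 fun x₀ => tendsto_iff_norm_sub_tendsto_zero.2 ?_
  have hbound : Tendsto (fun x => H * ‖x - x₀‖ ^ s) (𝓝 x₀) (𝓝 0) := by
    have hcont : Continuous fun x : X => H * ‖x - x₀‖ ^ s :=
      continuous_const.mul ((continuous_id.sub continuous_const).norm.rpow_const
        fun _ => Or.inr hs.le)
    simpa [Real.zero_rpow hs.ne'] using hcont.tendsto x₀
  exact squeeze_zero (fun _ => norm_nonneg _) (fun x => hf x x₀) hbound

lemma eLpNorm_le_eLpNorm_mul_measure_rpow_of_ae_eq_zero {α F : Type*} [MeasurableSpace α]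
    {μ : Measure α} [NormedAddCommGroup F] {f : α → F} {S : Set α} {p q : ℝ≥0∞} (hpq : p ≤ q)
    (hS : MeasurableSet S) (hf : AEStronglyMeasurable f μ) (h0 : ∀ᵐ x ∂μ, x ∉ S → f x = 0) :
    eLpNorm f p μ ≤ eLpNorm f q μ * μ S ^ (1 / p.toReal - 1 / q.toReal) := by
  have hf_eq : f =ᵐ[μ] S.indicator f := by
    filter_upwards [h0] with x hx
    by_cases h : x ∈ S
    · rw [Set.indicator_of_mem h]
    · rw [Set.indicator_of_notMem h, hx h]
  calc eLpNorm f p μ = eLpNorm f p (μ.restrict S) := by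
        rw [eLpNorm_congr_ae hf_eq, eLpNorm_indicator_eq_eLpNorm_restrict hS]
    _ ≤ eLpNorm f q (μ.restrict S) * μ.restrict S Set.univ ^ (1 / p.toReal - 1 / q.toReal) :=
        eLpNorm_le_eLpNorm_mul_rpow_measure_univ hpq hf.restrict
    _ ≤ eLpNorm f q μ * μ S ^ (1 / p.toReal - 1 / q.toReal) := by
        rw [Measure.restrict_apply_univ]
        exact mul_le_mul_left (eLpNorm_mono_measure f Measure.restrict_le_self) _

lemma eLpNorm_one_le_eLpNorm_two_mul_measure_rpow_of_ae_eq_zero {α F : Type*}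
    [MeasurableSpace α] {μ : Measure α} [NormedAddCommGroup F] {f : α → F} {S : Set α}
    (hS : MeasurableSet S) (hf : AEStronglyMeasurable f μ) (h0 : ∀ᵐ x ∂μ, x ∉ S → f x = 0) :
    eLpNorm f 1 μ ≤ eLpNorm f 2 μ * μ S ^ (1 / 2 : ℝ) := by
  convert eLpNorm_le_eLpNorm_mul_measure_rpow_of_ae_eq_zero one_le_two hS hf h0 using 2
  norm_num

lemma ae_shift_sub_eq_zero_of_notMem_cthickening {G F : Type*} [NormedAddCommGroup G]
    [MeasurableSpace G] [MeasurableAdd G] {μ : Measure G} [μ.IsAddRightInvariant] [AddGroup F]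
    {A : G → F} {E : Set G} (hA : ∀ᵐ x ∂μ, x ∉ E → A x = 0) {r : ℝ} {y : G} (hy : ‖y‖ ≤ r) :
    ∀ᵐ x ∂μ, x ∉ cthickening r E → A (x + y) - A x = 0 := by
  have hAy : ∀ᵐ x ∂μ, x + y ∉ E → A (x + y) = 0 :=
    (measurePreserving_add_right μ y).quasiMeasurePreserving.ae hA
  filter_upwards [hA, hAy] with x hx hxy hxE
  have hdist : dist x (x + y) ≤ r := by simpa [dist_eq_norm] using hy
  rw [hxy fun h => hxE (mem_cthickening_of_dist_le x (x + y) r E h hdist),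
    hx fun h => hxE (self_subset_cthickening E h), sub_zero]

lemma eLpNorm_shift_sub_le_besovSemi {n : ℕ} {s : ℝ} {F : Type*} [NormedAddCommGroup F]
    (f : EuclideanSpace ℝ (Fin n) → F) {y : EuclideanSpace ℝ (Fin n)} (hy : y ≠ 0) :
    eLpNorm (fun x => f (x + y) - f x) 2 volume ≤ besovSemi n s f * ENNReal.ofReal (‖y‖ ^ s) := by
  have hpos : 0 < ENNReal.ofReal (‖y‖ ^ s) :=
    ENNReal.ofReal_pos.2 (Real.rpow_pos_of_pos (norm_pos_iff.2 hy) s)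
  exact (ENNReal.div_le_iff hpos.ne' ENNReal.ofReal_ne_top).1 <|
    le_iSup₂ (f := fun (y : EuclideanSpace ℝ (Fin n)) (_ : y ≠ 0) =>
      eLpNorm (fun x => f (x + y) - f x) 2 volume / ENNReal.ofReal (‖y‖ ^ s)) y hy

lemma eLpNorm_one_shift_sub_le {n : ℕ} {s : ℝ} {F : Type*} [NormedAddCommGroup F]
    {A : EuclideanSpace ℝ (Fin n) → F} {E : Set (EuclideanSpace ℝ (Fin n))}
    (hA : AEStronglyMeasurable A volume) (hA0 : ∀ᵐ x ∂volume, x ∉ E → A x = 0)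
    {y : EuclideanSpace ℝ (Fin n)} (hy0 : y ≠ 0) (hy : ‖y‖ ≤ 1) :
    eLpNorm (fun x => A (x + y) - A x) 1 volume ≤
      volume (cthickening 1 E) ^ (1 / 2 : ℝ) * besovSemi n s A * ENNReal.ofReal (‖y‖ ^ s) := by
  have hAy : AEStronglyMeasurable (fun x => A (x + y)) volume :=
    hA.comp_measurePreserving (measurePreserving_add_right volume y)
  calc eLpNorm (fun x => A (x + y) - A x) 1 volume
      ≤ eLpNorm (fun x => A (x + y) - A x) 2 volume * volume (cthickening 1 E) ^ (1 / 2 : ℝ) :=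
        eLpNorm_one_le_eLpNorm_two_mul_measure_rpow_of_ae_eq_zero
          isClosed_cthickening.measurableSet (hAy.sub hA)
          (ae_shift_sub_eq_zero_of_notMem_cthickening hA0 hy)
    _ ≤ besovSemi n s A * ENNReal.ofReal (‖y‖ ^ s) * volume (cthickening 1 E) ^ (1 / 2 : ℝ) := by
        gcongr
        exact eLpNorm_shift_sub_le_besovSemi A hy0
    _ = volume (cthickening 1 E) ^ (1 / 2 : ℝ) * besovSemi n s A * ENNReal.ofReal (‖y‖ ^ s) := by
        ring

lemma eLpNorm_exp_smul_shift_sub_le {X F : Type*} [NormedAddCommGroup X] [MeasurableSpace X]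
    [BorelSpace X] [NormedAddCommGroup F] [NormedSpace ℂ F] {μ : Measure X}
    [μ.IsAddRightInvariant] {Φ : X → ℂ} {A : X → F} {K H s : ℝ} {p : ℝ≥0∞} (hp : 1 ≤ p)
    (hs : 0 < s) (hA : AEStronglyMeasurable A μ) (hre : ∀ x, (Φ x).re ≤ K)
    (hΦ : ∀ x y, ‖Φ x - Φ y‖ ≤ H * ‖x - y‖ ^ s) (y : X) :
    eLpNorm (fun x => exp (Φ (x + y)) • A (x + y) - exp (Φ x) • A x) p μ ≤
      ENNReal.ofReal (Real.exp K) * eLpNorm (fun x => A (x + y) - A x) p μ +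
        ENNReal.ofReal (Real.exp K * (H * ‖y‖ ^ s)) * eLpNorm A p μ := by
  have hAy : AEStronglyMeasurable (fun x => A (x + y)) μ :=
    hA.comp_measurePreserving (measurePreserving_add_right μ y)
  have hexp : Continuous fun x => exp (Φ x) :=
    continuous_exp.comp (continuous_of_norm_sub_le_mul_rpow hs hΦ)
  have hexpy := hexp.comp (continuous_add_const y)
  have hsplit : (fun x => exp (Φ (x + y)) • A (x + y) - exp (Φ x) • A x) =
      (fun x => exp (Φ (x + y)) • (A (x + y) - A x)) +
        fun x => (exp (Φ (x + y)) - exp (Φ x)) • A x := by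
    ext1 x
    simp only [Pi.add_apply, smul_sub, sub_smul]
    abel
  calc _ ≤ eLpNorm (fun x => exp (Φ (x + y)) • (A (x + y) - A x)) p μ +
        eLpNorm (fun x => (exp (Φ (x + y)) - exp (Φ x)) • A x) p μ :=
      hsplit ▸ eLpNorm_add_le (hexpy.aestronglyMeasurable.smul (hAy.sub hA))
        ((hexpy.sub hexp).aestronglyMeasurable.smul hA) hp
    _ ≤ _ := by
      gcongr <;> refine eLpNorm_le_mul_eLpNorm_of_ae_le_mul (ae_of_all _ fun x => ?_) p <;>
        rw [norm_smul]
      · rw [norm_exp]; gcongr; exact hre _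
      · gcongr; exact norm_exp_comp_add_sub_exp_comp_le hre hΦ x y

theorem stmt11_general (n : ℕ) (s : ℝ) (hs0 : 0 < s)
    (E : Set (EuclideanSpace ℝ (Fin n)))
    (hEm : MeasurableSet E)
    (A : EuclideanSpace ℝ (Fin n) → EuclideanSpace ℂ (Fin n))
    (hA2 : MemLp A 2 volume)
    (hA0 : ∀ᵐ x ∂(volume : Measure (EuclideanSpace ℝ (Fin n))), x ∉ E → A x = 0)
    (Φ : EuclideanSpace ℝ (Fin n) → ℂ) (K H : ℝ)
    (hΦb : ∀ x, ‖Φ x‖ ≤ K) (hΦh : ∀ x y, ‖Φ x - Φ y‖ ≤ H * ‖x - y‖ ^ s)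
    (y : EuclideanSpace ℝ (Fin n)) (hy : ‖y‖ ≤ 1) :
    eLpNorm (fun x => Complex.exp (Φ (x + y)) • A (x + y) - Complex.exp (Φ x) • A x) 1 volume ≤
      ENNReal.ofReal (Real.exp K) *
        ((volume (Metric.cthickening 1 E)) ^ (1 / 2 : ℝ) * besovSemi n s A +
          ENNReal.ofReal H * (volume E) ^ (1 / 2 : ℝ) * eLpNorm A 2 volume) *
        ENNReal.ofReal (‖y‖ ^ s) := by
  rcases eq_or_ne y 0 with rfl | hy0
  · simp
  have hA := hA2.aestronglyMeasurable
  have hre : ∀ x, (Φ x).re ≤ K := fun x => (re_le_norm _).trans (hΦb x)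
  calc _ ≤ ENNReal.ofReal (Real.exp K) * eLpNorm (fun x => A (x + y) - A x) 1 volume +
        ENNReal.ofReal (Real.exp K * (H * ‖y‖ ^ s)) * eLpNorm A 1 volume :=
      eLpNorm_exp_smul_shift_sub_le le_rfl hs0 hA hre hΦh y
    _ ≤ ENNReal.ofReal (Real.exp K) * (volume (cthickening 1 E) ^ (1 / 2 : ℝ) *
          besovSemi n s A * ENNReal.ofReal (‖y‖ ^ s)) +
        ENNReal.ofReal (Real.exp K * (H * ‖y‖ ^ s)) *
          (eLpNorm A 2 volume * volume E ^ (1 / 2 : ℝ)) := by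
      gcongr
      · exact eLpNorm_one_shift_sub_le hA hA0 hy0 hy
      · exact eLpNorm_one_le_eLpNorm_two_mul_measure_rpow_of_ae_eq_zero hEm hA hA0
    _ = _ := by
      rw [ENNReal.ofReal_mul (Real.exp_pos K).le, ENNReal.ofReal_mul' (by positivity)]
      ring

theorem stmt11 (n : ℕ) (s : ℝ) (hs0 : 0 < s) (hs1 : s < 1)
    (E : Set (EuclideanSpace ℝ (Fin n)))
    (hEb : Bornology.IsBounded E) (hEm : MeasurableSet E)
    (A : EuclideanSpace ℝ (Fin n) → EuclideanSpace ℂ (Fin n))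
    (hA2 : MemLp A 2 volume)
    (hA0 : ∀ᵐ x ∂(volume : Measure (EuclideanSpace ℝ (Fin n))), x ∉ E → A x = 0)
    (hAB : besovSemi n s A < ⊤)
    (Φ : EuclideanSpace ℝ (Fin n) → ℂ) (K H : ℝ)
    (hΦb : ∀ x, ‖Φ x‖ ≤ K) (hΦh : ∀ x y, ‖Φ x - Φ y‖ ≤ H * ‖x - y‖ ^ s)
    (y : EuclideanSpace ℝ (Fin n)) (hy : ‖y‖ ≤ 1) :
    eLpNorm (fun x => Complex.exp (Φ (x + y)) • A (x + y) - Complex.exp (Φ x) • A x) 1 volume ≤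
      ENNReal.ofReal (Real.exp K) *
        ((volume (Metric.cthickening 1 E)) ^ (1 / 2 : ℝ) * besovSemi n s A +
          ENNReal.ofReal H * (volume E) ^ (1 / 2 : ℝ) * eLpNorm A 2 volume) *
        ENNReal.ofReal (‖y‖ ^ s) :=
  stmt11_general n s hs0 E hEm A hA2 hA0 Φ K H hΦb hΦh y hy
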